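/- Let X₁, X₂, and Y be topological spaces and let φ be a homeomorphism of X₁ × X₂ onto a dense subset Z of Y. Suppose there is a continuous map ψ : Y → X₁ × X₂ such that ψ ∘ φ is the identity map of X₁ × X₂, and such that for each pair (M₁, M₂) of maximal limit sets of X₁ and X₂, ψ⁻¹(M₁ × M₂) equals the closure of φ(M₁ × M₂) in Y. Then every maximal limit set M of Y is of the form M = ψ⁻¹(M₁ × M₂) for some maximal limit sets M₁ of X₁ and M₂ of X₂. -/

import Mathlib

/-- `L` is a limit set if there is a net (equivalently, a proper filter) converging to
every point of `L`. -/
def IsLimitSet {X : Type*} [TopologicalSpace X] (L : Set X) : Prop :=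
  ∃ F : Filter X, F.NeBot ∧ ∀ x ∈ L, F ≤ nhds x

/-- A maximal limit set is a limit set not properly contained in any other limit set. -/
def IsMaxLimitSet {X : Type*} [TopologicalSpace X] (M : Set X) : Prop :=
  IsLimitSet M ∧ ∀ L : Set X, IsLimitSet L → M ⊆ L → L = M

/-- The lower Vietoris topology on `Set X`. -/
def lowerVietoris (X : Type*) [TopologicalSpace X] : TopologicalSpace (Set X) :=
  TopologicalSpace.generateFrom
    {V : Set (Set X) | ∃ U : Set X, IsOpen U ∧ V = {F : Set X | (F ∩ U).Nonempty}}

/-- `ℳℒ(X)`: the space of maximal limit sets of `X`, with the subspace topology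
inherited from the lower Vietoris topology. -/
def MLS (X : Type*) [TopologicalSpace X] : Type _ :=
  {M : Set X // IsMaxLimitSet M}

instance (X : Type*) [TopologicalSpace X] : TopologicalSpace (MLS X) :=
  TopologicalSpace.induced Subtype.val (lowerVietoris X)

/-!
The continuous map `ψ` sends a net converging to every point of `M` to nets converging to
every point of `pr₁ (ψ '' M)` and of `pr₂ (ψ '' M)`; by Zorn these limit sets lie in maximal
limit sets `M₁` and `M₂`, so `M ⊆ ψ⁻¹(M₁ × M₂)`. Conversely, products, continuous images and
closures of limit sets are limit sets, so `ψ⁻¹(M₁ × M₂) = closure (φ '' (M₁ × M₂))` is a limit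
set, and maximality of `M` forces equality.
-/

open Filter Topology

section LimitSet

variable {X X' : Type*} [TopologicalSpace X] [TopologicalSpace X']

theorem isLimitSet_iff_neBot_iInf_nhds {L : Set X} :
    IsLimitSet L ↔ (⨅ x ∈ L, 𝓝 x).NeBot :=
  ⟨fun ⟨_, _, h⟩ => neBot_of_le (le_iInf₂ h), fun h => ⟨_, h, fun x hx => iInf₂_le x hx⟩⟩

theorem isClosed_setOf_le_nhds (F : Filter X) : IsClosed {x | F ≤ 𝓝 x} := by
  refine isClosed_of_closure_subset fun y hy => le_nhds_iff.2 fun U hyU hU => ?_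
  obtain ⟨x, hxU, hx⟩ := mem_closure_iff.1 hy U hU hyU
  exact hx (hU.mem_nhds hxU)

theorem IsLimitSet.closure {L : Set X} (hL : IsLimitSet L) : IsLimitSet (closure L) := by
  obtain ⟨F, hF, h⟩ := hL
  exact ⟨F, hF, closure_minimal h (isClosed_setOf_le_nhds F)⟩

theorem IsLimitSet.image {L : Set X} (hL : IsLimitSet L) {f : X → X'} (hf : Continuous f) :
    IsLimitSet (f '' L) := by
  obtain ⟨F, hF, h⟩ := hL
  exact ⟨F.map f, map_neBot, Set.forall_mem_image.2 fun x hx => (map_mono (h x hx)).trans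
    (hf.tendsto x)⟩

theorem IsLimitSet.prod {L : Set X} {L' : Set X'} (hL : IsLimitSet L) (hL' : IsLimitSet L') :
    IsLimitSet (L ×ˢ L') := by
  obtain ⟨F, hF, h⟩ := hL
  obtain ⟨F', hF', h'⟩ := hL'
  refine ⟨F ×ˢ F', prod_neBot.2 ⟨hF, hF'⟩, fun p hp => ?_⟩
  rw [nhds_prod_eq]
  exact prod_mono (h p.1 hp.1) (h' p.2 hp.2)

theorem isLimitSet_sUnion_of_isChain {c : Set (Set X)} (hne : c.Nonempty)
    (hchain : IsChain (· ⊆ ·) c) (hc : ∀ L ∈ c, IsLimitSet L) : IsLimitSet (⋃₀ c) := by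
  have : Nonempty c := hne.to_subtype
  have hdir : Directed (· ≥ ·) fun L : c => ⨅ x ∈ (L : Set X), 𝓝 x := by
    rintro ⟨L, hL⟩ ⟨L', hL'⟩
    rcases hchain.total hL hL' with hsub | hsub
    · exact ⟨⟨L', hL'⟩, biInf_mono hsub, le_rfl⟩
    · exact ⟨⟨L, hL⟩, le_rfl, biInf_mono hsub⟩
  have hinf : (⨅ L : c, ⨅ x ∈ (L : Set X), 𝓝 x).NeBot :=
    iInf_neBot_of_directed' hdir fun L => isLimitSet_iff_neBot_iInf_nhds.1 (hc L L.2)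
  refine isLimitSet_iff_neBot_iInf_nhds.2 (neBot_of_le (f := ⨅ L : c, ⨅ x ∈ (L : Set X), 𝓝 x)
    (le_iInf₂ fun x hx => ?_))
  obtain ⟨L, hLc, hxL⟩ := hx
  exact (iInf_le _ ⟨L, hLc⟩).trans (iInf₂_le x hxL)

theorem exists_isMaxLimitSet_superset {L₀ : Set X} (h : IsLimitSet L₀) :
    ∃ M, IsMaxLimitSet M ∧ L₀ ⊆ M := by
  obtain ⟨M, hL₀M, hM⟩ := zorn_subset_nonempty {L : Set X | IsLimitSet L ∧ L₀ ⊆ L}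
    (fun c hc hchain hne => ⟨⋃₀ c,
      ⟨isLimitSet_sUnion_of_isChain hne hchain fun L hL => (hc hL).1,
        (hc hne.some_mem).2.trans (Set.subset_sUnion_of_mem hne.some_mem)⟩,
      fun _ => Set.subset_sUnion_of_mem⟩)
    L₀ ⟨h, subset_rfl⟩
  exact ⟨M, ⟨hM.prop.1, fun L hL hML =>
    subset_antisymm (hM.2 ⟨hL, hL₀M.trans hML⟩ hML) hML⟩, hL₀M⟩

end LimitSet

theorem maxLimitSet_eq_preimage_prod_general {X₁ X₂ Y : Type*} [TopologicalSpace X₁]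
    [TopologicalSpace X₂] [TopologicalSpace Y] (φ : X₁ × X₂ → Y)
    (hφ : Topology.IsEmbedding φ)
    (ψ : Y → X₁ × X₂) (hψ : Continuous ψ)
    (hcl : ∀ (M₁ : Set X₁) (M₂ : Set X₂), IsMaxLimitSet M₁ → IsMaxLimitSet M₂ →
      ψ ⁻¹' (M₁ ×ˢ M₂) = closure (φ '' (M₁ ×ˢ M₂)))
    {M : Set Y} (hM : IsMaxLimitSet M) :
    ∃ (M₁ : Set X₁) (M₂ : Set X₂), IsMaxLimitSet M₁ ∧ IsMaxLimitSet M₂ ∧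
      M = ψ ⁻¹' (M₁ ×ˢ M₂) := by
  obtain ⟨M₁, hM₁, hsub₁⟩ := exists_isMaxLimitSet_superset (hM.1.image (continuous_fst.comp hψ))
  obtain ⟨M₂, hM₂, hsub₂⟩ := exists_isMaxLimitSet_superset (hM.1.image (continuous_snd.comp hψ))
  have hN : IsLimitSet (ψ ⁻¹' (M₁ ×ˢ M₂)) :=
    hcl M₁ M₂ hM₁ hM₂ ▸ ((hM₁.1.prod hM₂.1).image hφ.continuous).closure
  have hMN : M ⊆ ψ ⁻¹' (M₁ ×ˢ M₂) := fun y hy =>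
    ⟨hsub₁ ⟨y, hy, rfl⟩, hsub₂ ⟨y, hy, rfl⟩⟩
  exact ⟨M₁, M₂, hM₁, hM₂, (hM.2 _ hN hMN).symm⟩

/-- Under the hypotheses of the retraction lemma, every maximal limit set of `Y` has the
form `ψ⁻¹(M₁ × M₂)` for maximal limit sets `M₁` of `X₁` and `M₂` of `X₂`. -/
theorem maxLimitSet_eq_preimage_prod {X₁ X₂ Y : Type*} [TopologicalSpace X₁]
    [TopologicalSpace X₂] [TopologicalSpace Y] (φ : X₁ × X₂ → Y)
    (hφ : Topology.IsEmbedding φ) (hdense : DenseRange φ)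
    (ψ : Y → X₁ × X₂) (hψ : Continuous ψ) (hretr : ψ ∘ φ = id)
    (hcl : ∀ (M₁ : Set X₁) (M₂ : Set X₂), IsMaxLimitSet M₁ → IsMaxLimitSet M₂ →
      ψ ⁻¹' (M₁ ×ˢ M₂) = closure (φ '' (M₁ ×ˢ M₂)))
    {M : Set Y} (hM : IsMaxLimitSet M) :
    ∃ (M₁ : Set X₁) (M₂ : Set X₂), IsMaxLimitSet M₁ ∧ IsMaxLimitSet M₂ ∧
      M = ψ ⁻¹' (M₁ ×ˢ M₂) :=
  maxLimitSet_eq_preimage_prod_general φ hφ ψ hψ hcl hM
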